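/- arXiv:1811.11737 — 9 statements merged into one kernel-verified Lean document; each statement's English description precedes it below -/
import Mathlib

section
/- Let P be a poset on a countable (finite or countably infinite) carrier set that satisfies the descending chain condition (every descending sequence eventually stabilizes, i.e. the strict order is well-founded) and contains no infinite antichain. Then the collection of all downsets of P is countable. -/
/-!
A lower set is the complement of the upper closure of the minimal elements of its complement
(the descending chain condition supplies enough minimal elements). Those minimal elements form
an antichain, hence a finite set, and a countable type has only countably many finite subsets.
-/

theorem IsUpperSet.upperClosure_setOf_minimal {α : Type*} [Preorder α] [WellFoundedLT α]
    {s : Set α} (hs : IsUpperSet s) : (upperClosure {x | Minimal (· ∈ s) x} : Set α) = s := by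
  ext x
  simp only [SetLike.mem_coe, mem_upperClosure, Set.mem_ofPred_eq]
  constructor
  · rintro ⟨a, ha, hax⟩
    exact hs hax ha.prop
  · intro hx
    obtain ⟨a, hax, ha⟩ := exists_minimal_le_of_wellFoundedLT (· ∈ s) x hx
    exact ⟨a, ha, hax⟩

/-- A poset on a countable carrier set that satisfies the descending chain condition
(the strict order is well-founded) and contains no infinite antichain has only
countably many downsets (lower sets). -/
theorem countable_downsets_of_dcc_no_infinite_antichain
    {P : Type*} [PartialOrder P] [Countable P]
    (hDCC : WellFounded ((· < ·) : P → P → Prop))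
    (hAC : ∀ S : Set P, IsAntichain (· ≤ ·) S → S.Finite) :
    {X : Set P | IsLowerSet X}.Countable := by
  have : WellFoundedLT P := ⟨hDCC⟩
  refine (Set.Countable.ofPred_finite.image fun S : Set P => (upperClosure S : Set P)ᶜ).mono ?_
  intro X hX
  refine ⟨{x | Minimal (· ∈ Xᶜ) x}, hAC _ (setOfPred_minimal_antichain _), ?_⟩
  simp only [hX.compl.upperClosure_setOf_minimal, compl_compl]
end

section
/- Let P be a well-partial order (a poset such that for every sequence (x_i)_{i∈ℕ} of elements there exist indices i < j with x_i ≤ x_j) on a countable carrier set. Then the collection of all downsets of P is countable. -/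
/-- A well-partial order (for every sequence there are `i < j` with `x i ≤ x j`)
on a countable carrier set has only countably many downsets (lower sets). -/
theorem countable_downsets_of_wpo
    {P : Type*} [PartialOrder P] [Countable P]
    (hwpo : ∀ x : ℕ → P, ∃ i j : ℕ, i < j ∧ x i ≤ x j) :
    {X : Set P | IsLowerSet X}.Countable := by
  classical
  -- well-foundedness of <
  have hwf : WellFounded ((· < ·) : P → P → Prop) := by
    rw [RelEmbedding.wellFounded_iff_isEmpty]
    constructor
    intro f
    obtain ⟨i, j, hij, hle⟩ := hwpo f
    have hlt : f j < f i := f.map_rel_iff.2 hij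
    exact absurd hle (not_le_of_gt hlt)
  -- minimal elements below any element of a set
  have hmin : ∀ (U : Set P), ∀ x ∈ U, ∃ m, m ∈ U ∧ m ≤ x ∧ ∀ b ∈ U, b ≤ m → b = m := by
    intro U x hx
    obtain ⟨m, ⟨hmU, hmx⟩, hmmin⟩ := hwf.has_min {b | b ∈ U ∧ b ≤ x} ⟨x, hx, le_refl x⟩
    refine ⟨m, hmU, hmx, fun b hb hbm => ?_⟩
    by_contra hne
    exact hmmin b ⟨hb, hbm.trans hmx⟩ (lt_of_le_of_ne hbm hne)
  -- the map: minimal elements of the complement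
  set F : Set P → Set P := fun X => {m | m ∉ X ∧ ∀ b ∉ X, b ≤ m → b = m} with hF
  have hrec : ∀ X : Set P, IsLowerSet X → X = {p | ∀ m ∈ F X, ¬ m ≤ p} := by
    intro X hX
    ext p
    simp only [Set.mem_setOf_eq, hF]
    constructor
    · intro hp m hm hmp
      exact hm.1 (hX hmp hp)
    · intro h
      by_contra hp
      obtain ⟨m, hmU, hmp, hmmin⟩ := hmin Xᶜ p hp
      exact h m ⟨hmU, hmmin⟩ hmp
  have hanti : ∀ X : Set P, (F X).Finite := by
    intro X
    by_contra hinf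
    have hinf' : (F X).Infinite := hinf
    obtain g := hinf'.natEmbedding
    obtain ⟨i, j, hij, hle⟩ := hwpo (fun n => (g n : P))
    have heq : (g i : P) = (g j : P) := (g j).2.2 (g i) (g i).2.1 hle
    exact absurd (g.injective (Subtype.ext heq)) hij.ne
  refine Set.MapsTo.countable_of_injOn (t := {s : Set P | s.Finite})
    (f := F) (fun X _ => hanti X) ?_ Set.Countable.setOf_finite
  intro X hX Y hY hFXY
  rw [hrec X hX, hrec Y hY, hFXY]
end

section
/- For every finite nonempty set I, the collection of all downsets of the poset ℕ^I (functions I → ℕ ordered pointwise by ≤) has cardinality exactly ℵ₀. -/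
/-!
A lower set `X` of a well-quasi-order is determined by the minimal elements of its complement,
and these form an antichain, hence a finite set. So the lower sets of a countable
well-quasi-order embed into its finite subsets and are countably many. By Dickson's lemma
`ℕ^I` is such an order for finite `I`. Conversely, the principal lower sets `Iic a` are pairwise
distinct, and `ℕ^I` is infinite once `I` is nonempty.
-/

open Set

namespace IsLowerSet

variable {α : Type*}

lemma notMem_iff_exists_minimal_le [Preorder α] [WellFoundedLT α] {X : Set α}
    (hX : IsLowerSet X) {a : α} : a ∉ X ↔ ∃ m ≤ a, Minimal (· ∉ X) m :=
  ⟨exists_minimal_le_of_wellFoundedLT (· ∉ X) a, fun ⟨_, hma, hm⟩ ha ↦ hm.prop (hX hma ha)⟩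

lemma injOn_setOf_minimal_notMem [Preorder α] [WellFoundedLT α] :
    InjOn (fun X : Set α ↦ {m | Minimal (· ∉ X) m}) {X | IsLowerSet X} := by
  intro X hX Y hY hXY
  ext a
  rw [← not_iff_not, hX.notMem_iff_exists_minimal_le, hY.notMem_iff_exists_minimal_le]
  exact exists_congr fun m ↦ and_congr_right fun _ ↦ Set.ext_iff.mp hXY m

end IsLowerSet

lemma countable_setOf_isLowerSet {α : Type*} [PartialOrder α] [WellQuasiOrderedLE α]
    [Countable α] : {X : Set α | IsLowerSet X}.Countable := by
  have hmaps : MapsTo (fun X : Set α ↦ {m | Minimal (· ∉ X) m}) {X | IsLowerSet X}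
      {s | s.Finite} := fun X _ ↦
    WellQuasiOrderedLE.finite_of_isAntichain (setOfPred_minimal_antichain _)
  exact hmaps.countable_of_injOn IsLowerSet.injOn_setOf_minimal_notMem Countable.ofPred_finite

lemma infinite_setOf_isLowerSet {α : Type*} [PartialOrder α] [Infinite α] :
    {X : Set α | IsLowerSet X}.Infinite :=
  infinite_of_injective_forall_mem Iic_injective isLowerSet_Iic

/-- For every finite nonempty set `I`, the collection of all downsets (lower sets)
of `ℕ^I` with the pointwise order has cardinality exactly `ℵ₀`. -/
theorem mk_downsets_pi_nat_eq_aleph0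
    {I : Type*} [Finite I] [Nonempty I] :
    Cardinal.mk {X : Set (I → ℕ) | IsLowerSet X} = Cardinal.aleph0 := by
  have : Countable {X : Set (I → ℕ) | IsLowerSet X} := countable_setOf_isLowerSet.to_subtype
  have : Infinite {X : Set (I → ℕ) | IsLowerSet X} := infinite_setOf_isLowerSet.to_subtype
  exact Cardinal.mk_eq_aleph0 _
end

section
/- For a set A, subsets γ₁,…,γₙ and γ'₁,…,γ'ₙ of A (n ≥ 1): if R(γ₁,…,γₙ) = R(γ'₁,…,γ'ₙ) and this common relation is a proper subset of Aⁿ, then γᵢ = γ'ᵢ for every i ∈ {1,…,n}. (Parameter reconstruction/uniqueness for crosses.) -/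
/-- The `n`-ary cross relation defined by the tuple `γ` of unary relations:
`{(x₁,…,xₙ) : x₁ ∈ γ₁ ∨ … ∨ xₙ ∈ γₙ}`. -/
def Cross {A : Type*} {n : ℕ} (γ : Fin n → Set A) : Set (Fin n → A) :=
  {x | ∃ i, x i ∈ γ i}

lemma cross_param_le {A : Type*} {n : ℕ} {γ γ' : Fin n → Set A} {x : Fin n → A}
    (hle : Cross γ ⊆ Cross γ') (hx : ∀ j, x j ∉ γ' j) (i : Fin n) :
    γ i ⊆ γ' i := by
  intro a ha
  have hmem : Function.update x i a ∈ Cross γ := ⟨i, by simp [ha]⟩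
  obtain ⟨j, hj⟩ := hle hmem
  rcases eq_or_ne j i with rfl | hne
  · simpa using hj
  · exact absurd (by simpa [Function.update_of_ne hne] using hj) (hx j)

/-- Parameter reconstruction / uniqueness for crosses: if two tuples of subsets define
the same cross relation and this relation is a proper subset of `Aⁿ`, then the tuples
coincide. -/
theorem cross_param_unique {A : Type*} {n : ℕ} (hn : 1 ≤ n)
    (γ γ' : Fin n → Set A) (heq : Cross γ = Cross γ')
    (hproper : Cross γ ≠ (Set.univ : Set (Fin n → A))) :
    γ = γ' := by
  obtain ⟨x, hx⟩ : ∃ x : Fin n → A, x ∉ Cross γ := by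
    by_contra h
    push_neg at h
    exact hproper (Set.eq_univ_of_forall h)
  have hx' : ∀ j, x j ∉ γ' j := by
    intro j hj
    exact hx (heq ▸ (⟨j, hj⟩ : x ∈ Cross γ'))
  have hxg : ∀ j, x j ∉ γ j := fun j hj => hx ⟨j, hj⟩
  funext i
  exact le_antisymm (cross_param_le heq.le hx' i) (cross_param_le heq.ge hxg i)
end

section
/- Let Γ be a set of subsets of a set A, and let ρ, ρ' ∈ DD(Γ) be relations disjunctively definable from Γ such that pt(ρ) ⊑ pt(ρ') in ℕ^Γ (that is, pt(ρ)(γ) ≤ pt(ρ')(γ) for all γ ∈ Γ and the supports of pt(ρ) and pt(ρ') coincide). Then Pol({ρ'}) ⊆ Pol({ρ}). -/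
/-- A finitary relation on `A`: an arity together with a set of tuples. -/
abbrev FinRel (A : Type*) := Σ n : ℕ, Set (Fin n → A)

/-- A `k`-ary operation `f` preserves an `n`-ary relation `ρ`. -/
def Preserves {A : Type*} {k n : ℕ} (f : (Fin k → A) → A) (ρ : Set (Fin n → A)) : Prop :=
  ∀ r : Fin k → Fin n → A, (∀ j, r j ∈ ρ) → (fun i => f fun j => r j i) ∈ ρ

/-- A finitary operation on `A` of positive arity `k + 1`. -/
abbrev Op (A : Type*) := Σ k : ℕ, (Fin (k + 1) → A) → A

/-- The polymorphism clone of a set of finitary relations. -/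
def Pol {A : Type*} (Q : Set (FinRel A)) : Set (Op A) :=
  {f | ∀ ρ ∈ Q, Preserves f.2 ρ.2}

/-- Relations disjunctively definable from the unary language `Γ`. -/
def DD {A : Type*} (Γ : Set (Set A)) : Set (FinRel A) :=
  {ρ | 1 ≤ ρ.1 ∧ ∃ γ : Fin ρ.1 → Set A, (∀ i, γ i ∈ Γ) ∧ ρ.2 = Cross γ}

/-- Support of a tuple of naturals. -/
def supp {I : Type*} (x : I → ℕ) : Set I := {i | x i ≠ 0}

/-- The order `⊑` on `ℕ^I`: pointwise `≤` together with equal supports. -/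
def sle {I : Type*} (x y : I → ℕ) : Prop := (∀ i, x i ≤ y i) ∧ supp x = supp y

/-- Downsets of the poset `(ℕ^I, ⊑)`. -/
def IsSleDownset {I : Type*} (X : Set (I → ℕ)) : Prop :=
  ∀ x ∈ X, ∀ y, sle y x → y ∈ X

open Classical in
/-- The canonical parameter tuple of a relation: the unique tuple of members of `Γ`
defining it as a cross if it is a proper subset of the full power, and `(A,…,A)` otherwise. -/
noncomputable def param {A : Type*} (Γ : Set (Set A)) (ρ : FinRel A) : Fin ρ.1 → Set A :=
  if ρ.2 = Set.univ then fun _ => Set.univ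
  else if h : ∃ γ : Fin ρ.1 → Set A, (∀ i, γ i ∈ Γ) ∧ ρ.2 = Cross γ then h.choose
  else fun _ => ∅

/-- The pattern of a relation: how often each `γ ∈ Γ` occurs in its canonical parameter. -/
noncomputable def pt {A : Type*} (Γ : Set (Set A)) (ρ : FinRel A) : ↥Γ → ℕ :=
  fun γ => Nat.card {i : Fin ρ.1 // param Γ ρ i = (γ : Set A)}

/-- The encoding map `I`: the downset of `(ℕ^Γ, ⊑)` generated by the patterns of `Q`. -/
def enc {A : Type*} (Γ : Set (Set A)) (Q : Set (FinRel A)) : Set (↥Γ → ℕ) :=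
  {x | ∃ ρ ∈ Q, sle x (pt Γ ρ)}

/-- `F^Inv`: the relations in `DD Γ` preserved by every operation in `F`. -/
def InvDD {A : Type*} (Γ : Set (Set A)) (F : Set (Op A)) : Set (FinRel A) :=
  {ρ | ρ ∈ DD Γ ∧ ∀ f ∈ F, Preserves f.2 ρ.2}


/-!
Write `ρ = Cross g` and `ρ' = Cross g'` with the canonical parameters `g`, `g'`. The relation
`pt ρ ⊑ pt ρ'` says that every `γ` occurs at least as often in `g'` as in `g`, and occurs in `g'`
only if it occurs in `g`. Hence `g' = g ∘ σ` for a surjection `σ` of coordinates, so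
`x ∈ ρ ↔ x ∘ σ ∈ ρ'`: `ρ` is a coordinate pullback of `ρ'`, and pullbacks inherit polymorphisms.
-/

open Function Set

theorem Finite.exists_surjective_of_card_le {α β : Type*} [Finite α] [Finite β] [Nonempty β]
    (h : Nat.card β ≤ Nat.card α) : ∃ f : α → β, Surjective f := by
  cases nonempty_fintype α
  cases nonempty_fintype β
  rw [Nat.card_eq_fintype_card, Nat.card_eq_fintype_card] at h
  exact exists_surjective_iff.2 ⟨inferInstance, Embedding.nonempty_of_card_le h⟩

/-- The surjection is assembled from surjections between corresponding fibres. -/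
theorem exists_surjective_comp_eq_of_card_fiber_le {ι ι' α : Type*} [Finite ι] [Finite ι']
    {g : ι → α} {g' : ι' → α}
    (hcard : ∀ a, Nat.card {i // g i = a} ≤ Nat.card {i' // g' i' = a})
    (hrange : range g' ⊆ range g) :
    ∃ σ : ι' → ι, Surjective σ ∧ g ∘ σ = g' := by
  have hfiber : ∀ a, ∃ s : {i' // g' i' = a} → {i // g i = a}, Surjective s := by
    intro a
    by_cases hempty : IsEmpty {i // g i = a}
    · have : IsEmpty {i' // g' i' = a} :=
        ⟨fun ⟨i', hi'⟩ => hempty.false ⟨_, (hrange ⟨i', rfl⟩).choose_spec.trans hi'⟩⟩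
      exact ⟨isEmptyElim, isEmptyElim⟩
    · have : Nonempty {i // g i = a} := not_isEmpty_iff.1 hempty
      exact Finite.exists_surjective_of_card_le (hcard a)
  choose s hs using hfiber
  let σ : ι' → ι := fun i' => s (g' i') ⟨i', rfl⟩
  have hσ : ∀ a (x : {i' // g' i' = a}), (s a x : ι) = σ x := by
    rintro _ ⟨i', rfl⟩
    rfl
  refine ⟨σ, fun i => ?_, funext fun i' => (s (g' i') ⟨i', rfl⟩).2⟩
  obtain ⟨x, hx⟩ := hs (g i) ⟨i, rfl⟩
  exact ⟨x, (hσ _ x).symm.trans (congrArg Subtype.val hx)⟩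

theorem preserves_univ {A : Type*} {k n : ℕ} (f : (Fin k → A) → A) :
    Preserves f (univ : Set (Fin n → A)) :=
  fun _ _ => trivial

theorem Preserves.comap {A : Type*} {k m n : ℕ} {f : (Fin k → A) → A} {ρ : Set (Fin m → A)}
    (h : Preserves f ρ) (σ : Fin m → Fin n) :
    Preserves f ((fun x : Fin n → A => x ∘ σ) ⁻¹' ρ) :=
  fun r hr => h (fun j => r j ∘ σ) hr

theorem mem_pol_singleton {A : Type*} {f : Op A} {ρ : FinRel A} :
    f ∈ Pol {ρ} ↔ Preserves f.2 ρ.2 := by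
  simp [Pol]

theorem cross_eq_preimage_cross_comp {A : Type*} {m n : ℕ} (γ : Fin n → Set A)
    {σ : Fin m → Fin n} (hσ : Surjective σ) :
    Cross γ = (fun x : Fin n → A => x ∘ σ) ⁻¹' Cross (γ ∘ σ) := by
  ext x
  constructor
  · rintro ⟨i, hi⟩
    obtain ⟨i', rfl⟩ := hσ i
    exact ⟨i', hi⟩
  · rintro ⟨i', hi'⟩
    exact ⟨σ i', hi'⟩

section Pattern

variable {A : Type*} {Γ : Set (Set A)} {ρ ρ' : FinRel A}

theorem param_spec (hρ : ρ ∈ DD Γ) (hu : ρ.2 ≠ univ) :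
    (∀ i, param Γ ρ i ∈ Γ) ∧ ρ.2 = Cross (param Γ ρ) := by
  rw [param, if_neg hu, dif_pos hρ.2]
  exact hρ.2.choose_spec

theorem pt_ne_zero_iff (γ : Γ) : pt Γ ρ γ ≠ 0 ↔ ∃ i, param Γ ρ i = γ := by
  rw [pt, Nat.card_ne_zero, nonempty_subtype]
  exact and_iff_left (Finite.of_fintype _)

theorem exists_param_eq_iff_of_supp_pt_eq (h : supp (pt Γ ρ) = supp (pt Γ ρ')) (γ : Γ) :
    (∃ i, param Γ ρ i = γ) ↔ ∃ i', param Γ ρ' i' = γ := by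
  rw [← pt_ne_zero_iff, ← pt_ne_zero_iff]
  exact Set.ext_iff.1 h γ

theorem ne_univ_of_supp_pt_eq (hρ : ρ ∈ DD Γ) (hu : ρ.2 ≠ univ)
    (h : supp (pt Γ ρ) = supp (pt Γ ρ')) : ρ'.2 ≠ univ := by
  intro hu'
  obtain ⟨hΓ, hρ_eq⟩ := param_spec hρ hu
  have hparam' : param Γ ρ' = fun _ => univ := by rw [param, if_pos hu']
  have hparam : ∀ i, param Γ ρ i = univ := fun i => by
    obtain ⟨i', hi'⟩ := (exists_param_eq_iff_of_supp_pt_eq h ⟨_, hΓ i⟩).1 ⟨i, rfl⟩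
    rw [hparam'] at hi'
    exact hi'.symm
  exact hu (hρ_eq ▸ eq_univ_of_forall fun _ => ⟨⟨0, hρ.1⟩, hparam _ ▸ trivial⟩)

theorem range_param_subset_of_supp_pt_eq (hΓ' : ∀ i', param Γ ρ' i' ∈ Γ)
    (h : supp (pt Γ ρ) = supp (pt Γ ρ')) : range (param Γ ρ') ⊆ range (param Γ ρ) := by
  rintro _ ⟨i', rfl⟩
  exact (exists_param_eq_iff_of_supp_pt_eq h ⟨_, hΓ' i'⟩).2 ⟨i', rfl⟩

/-- Outside `Γ` the fibres of `param Γ ρ` are empty, so `pt` records all of its fibre sizes. -/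
theorem card_fiber_param_le (hΓ : ∀ i, param Γ ρ i ∈ Γ) (h : ∀ γ, pt Γ ρ γ ≤ pt Γ ρ' γ)
    (a : Set A) :
    Nat.card {i // param Γ ρ i = a} ≤ Nat.card {i' // param Γ ρ' i' = a} := by
  by_cases ha : a ∈ Γ
  · exact h ⟨a, ha⟩
  · have : IsEmpty {i // param Γ ρ i = a} := ⟨fun ⟨i, hi⟩ => ha (hi ▸ hΓ i)⟩
    simp

end Pattern

/-- If the patterns of two disjunctively definable relations satisfy `pt ρ ⊑ pt ρ'`
in `ℕ^Γ`, then the polymorphism clones satisfy the dual inclusion. -/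
theorem pol_antitone_of_pattern_sle {A : Type*} (Γ : Set (Set A))
    (ρ ρ' : FinRel A) (hρ : ρ ∈ DD Γ) (hρ' : ρ' ∈ DD Γ)
    (hle : sle (pt Γ ρ) (pt Γ ρ')) :
    Pol {ρ'} ⊆ Pol {ρ} := by
  intro f hf
  rw [mem_pol_singleton] at hf ⊢
  by_cases hu : ρ.2 = univ
  · rw [hu]
    exact preserves_univ f.2
  obtain ⟨hΓ, hρ_eq⟩ := param_spec hρ hu
  obtain ⟨hΓ', hρ'_eq⟩ := param_spec hρ' (ne_univ_of_supp_pt_eq hρ hu hle.2)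
  obtain ⟨σ, hσ, hcomp⟩ := exists_surjective_comp_eq_of_card_fiber_le
    (card_fiber_param_le hΓ hle.1) (range_param_subset_of_supp_pt_eq hΓ' hle.2)
  have hf' : Preserves f.2 (Cross (param Γ ρ ∘ σ)) := hcomp ▸ hρ'_eq ▸ hf
  rw [hρ_eq, cross_eq_preimage_cross_comp _ hσ]
  exact hf'.comap σ
end

section
/- Let Γ be a set of subsets of a set A. For a set F of finitary operations on A, let F^Inv := {ρ ∈ DD(Γ) : every f ∈ F preserves ρ}. Then the map ψ sending each clone F ∈ {Pol(Q) : Q ⊆ DD(Γ)} to the set {pt(ρ) : ρ ∈ F^Inv} ⊆ ℕ^Γ is well-defined (each value ψ(F) is a downset of (ℕ^Γ, ⊑)) and is an order embedding from ({Pol(Q) : Q ⊆ DD(Γ)}, ⊇) into the downsets of (ℕ^Γ, ⊑) ordered by inclusion; in particular, for clones F₁ = Pol(Q₁) and F₂ = Pol(Q₂) one has ψ(F₁) ⊆ ψ(F₂) if and only if F₂ ⊆ F₁. -/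
section Aux

variable {A : Type*}

lemma cross_const_univ {n : ℕ} (hn : 1 ≤ n) :
    Cross (fun _ : Fin n => (Set.univ : Set A)) = Set.univ := by
  ext x
  simp only [Cross, Set.mem_setOf_eq, Set.mem_univ, iff_true]
  exact ⟨⟨0, hn⟩, trivial⟩

lemma cross_unique {n : ℕ} {γ δ : Fin n → Set A} (h : Cross γ = Cross δ)
    (hne : Cross δ ≠ Set.univ) : γ = δ := by
  obtain ⟨x, hx⟩ : ∃ x, x ∉ Cross δ := by
    by_contra hc; push_neg at hc; exact hne (Set.eq_univ_iff_forall.2 hc)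
  have hx' : x ∉ Cross γ := h ▸ hx
  have hxδ : ∀ i, x i ∉ δ i := fun i hi => hx ⟨i, hi⟩
  have hxγ : ∀ i, x i ∉ γ i := fun i hi => hx' ⟨i, hi⟩
  funext i
  ext a
  constructor
  · intro ha
    have hmem : Function.update x i a ∈ Cross δ := by
      rw [← h]; exact ⟨i, by simpa using ha⟩
    obtain ⟨i', hi'⟩ := hmem
    rcases eq_or_ne i' i with rfl | hne'
    · simpa using hi'
    · rw [Function.update_of_ne hne'] at hi'
      exact absurd hi' (hxδ i')
  · intro ha
    have hmem : Function.update x i a ∈ Cross γ := by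
      rw [h]; exact ⟨i, by simpa using ha⟩
    obtain ⟨i', hi'⟩ := hmem
    rcases eq_or_ne i' i with rfl | hne'
    · simpa using hi'
    · rw [Function.update_of_ne hne'] at hi'
      exact absurd hi' (hxγ i')

lemma param_univ {Γ : Set (Set A)} {ρ : FinRel A} (h : ρ.2 = Set.univ) :
    param Γ ρ = fun _ => Set.univ := by
  unfold param; rw [if_pos h]

lemma param_cross_eq {Γ : Set (Set A)} {ρ : FinRel A} (hρ : ρ ∈ DD Γ) :
    ρ.2 = Cross (param Γ ρ) := by
  obtain ⟨hn, δ, hδ, he⟩ := hρ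
  unfold param
  split_ifs with h1 h2
  · rw [h1]; exact (cross_const_univ hn).symm
  · exact h2.choose_spec.2
  · exact absurd ⟨δ, hδ, he⟩ h2

lemma param_mem {Γ : Set (Set A)} {ρ : FinRel A} (hρ : ρ ∈ DD Γ) (hne : ρ.2 ≠ Set.univ) :
    ∀ i, param Γ ρ i ∈ Γ := by
  obtain ⟨hn, δ, hδ, he⟩ := hρ
  unfold param
  rw [if_neg hne,
    dif_pos (⟨δ, hδ, he⟩ : ∃ γ : Fin ρ.1 → Set A, (∀ i, γ i ∈ Γ) ∧ ρ.2 = Cross γ)]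
  exact (Exists.choose_spec
    (⟨δ, hδ, he⟩ : ∃ γ : Fin ρ.1 → Set A, (∀ i, γ i ∈ Γ) ∧ ρ.2 = Cross γ)).1

lemma param_cross {Γ : Set (Set A)} {m : ℕ} (hm : 1 ≤ m) (δ : Fin m → Set A)
    (hδ : ∀ j, δ j ∈ Γ) (hconst : Cross δ = Set.univ → δ = fun _ => Set.univ) :
    param Γ (⟨m, Cross δ⟩ : FinRel A) = δ := by
  unfold param
  split_ifs with h1 h2
  · exact (hconst h1).symm
  · exact cross_unique h2.choose_spec.2.symm h1
  · exact absurd ⟨δ, hδ, rfl⟩ h2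

lemma preserves_cross_of_surj {k n m : ℕ} {γ : Fin n → Set A} {δ : Fin m → Set A}
    {s : Fin n → Fin m} (hsurj : Function.Surjective s) (hval : ∀ t, γ t = δ (s t))
    {f : (Fin k → A) → A} (hf : Preserves f (Cross γ)) : Preserves f (Cross δ) := by
  intro r hr
  have hrows : ∀ j, (fun t => r j (s t)) ∈ Cross γ := by
    intro j
    obtain ⟨i, hi⟩ := hr j
    obtain ⟨t, ht⟩ := hsurj i
    refine ⟨t, ?_⟩
    show r j (s t) ∈ γ t
    rw [hval t, ht]
    exact hi
  obtain ⟨t, ht⟩ := hf (fun j t => r j (s t)) hrows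
  exact ⟨s t, by rw [← hval t]; exact ht⟩

lemma exists_equiv_of_fiber_card {X Y T : Type*} [Finite X] [Finite Y] (u : X → T) (w : Y → T)
    (h : ∀ t, Nat.card {x // u x = t} = Nat.card {y // w y = t}) :
    ∃ e : X ≃ Y, ∀ x, w (e x) = u x := by
  have he : ∀ t : T, {x // u x = t} ≃ {y // w y = t} := fun t =>
    (Finite.card_eq.mp (h t)).some
  refine ⟨(Equiv.sigmaFiberEquiv u).symm.trans
    ((Equiv.sigmaCongrRight he).trans (Equiv.sigmaFiberEquiv w)), fun x => ?_⟩
  exact ((he (u x)) ⟨x, rfl⟩).2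

lemma main_construction {Γ : Set (Set A)} {n : ℕ} (hn : 1 ≤ n) (v : Fin n → Set A)
    (hv : ∀ i, v i ∈ Γ) (y : ↥Γ → ℕ)
    (hle : ∀ γ : ↥Γ, y γ ≤ Nat.card {i // v i = (γ : Set A)})
    (hsupp : ∀ γ : ↥Γ, y γ = 0 ↔ Nat.card {i // v i = (γ : Set A)} = 0) :
    ∃ (m : ℕ) (δ : Fin m → Set A), 1 ≤ m ∧ (∀ j, δ j ∈ Γ) ∧
      (∀ γ : ↥Γ, Nat.card {j // δ j = (γ : Set A)} = y γ) ∧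
      ∃ s : Fin n → Fin m, Function.Surjective s ∧ ∀ i, v i = δ (s i) := by
  classical
  let K := Σ γ : ↥Γ, Fin (y γ)
  let fib : ↥Γ → Type _ := fun γ => {i : Fin n // v i = (γ : Set A)}
  let ι : ∀ γ : ↥Γ, Fin (y γ) → fib γ := fun γ a =>
    (Finite.equivFin (fib γ)).symm (Fin.castLE (hle γ) a)
  have ιinj : ∀ γ, Function.Injective (ι γ) := by
    intro γ a b hab
    have h2 := (Finite.equivFin (fib γ)).symm.injective hab
    exact Fin.castLE_injective _ h2
  let Θ : K → Fin n := fun k => (ι k.1 k.2).val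
  have hΘv : ∀ k : K, v (Θ k) = (k.1 : Set A) := fun k => (ι k.1 k.2).2
  have hΘinj : Function.Injective Θ := by
    rintro ⟨γ, a⟩ ⟨γ', b⟩ hab
    have hγ : γ = γ' := Subtype.ext (by
      rw [← hΘv ⟨γ, a⟩, ← hΘv ⟨γ', b⟩, hab])
    subst hγ
    have hι : ι γ a = ι γ b := Subtype.ext hab
    exact congrArg (Sigma.mk γ) (ιinj γ hι)
  have hKfin : Finite K := Finite.of_injective Θ hΘinj
  have hypos : ∀ i : Fin n, 0 < y ⟨v i, hv i⟩ := by
    intro i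
    have hcne : Nat.card {i' // v i' = ((⟨v i, hv i⟩ : ↥Γ) : Set A)} ≠ 0 :=
      Nat.card_ne_zero.mpr ⟨⟨⟨i, rfl⟩⟩, inferInstance⟩
    exact Nat.pos_of_ne_zero (fun h => hcne ((hsupp _).1 h))
  have hK : Nonempty K := ⟨⟨⟨v ⟨0, hn⟩, hv _⟩, ⟨0, hypos ⟨0, hn⟩⟩⟩⟩
  set m := Nat.card K with hmdef
  have hm : 1 ≤ m := Nat.one_le_iff_ne_zero.mpr (Nat.card_ne_zero.mpr ⟨hK, hKfin⟩)
  let E : K ≃ Fin m := Finite.equivFin K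
  let δ : Fin m → Set A := fun j => ((E.symm j).1 : Set A)
  have hcard : ∀ γ : ↥Γ, Nat.card {j // δ j = (γ : Set A)} = y γ := by
    intro γ
    have e1 : {j // δ j = (γ : Set A)} ≃ {k : K // k.1 = γ} :=
      Equiv.subtypeEquiv E.symm (fun j => by
        constructor
        · intro hj; exact Subtype.ext hj
        · intro hj; exact congrArg Subtype.val hj)
    have e2 : {k : K // k.1 = γ} ≃ Fin (y γ) :=
      { toFun := fun k => Fin.cast (congrArg y k.2) k.1.2
        invFun := fun a => ⟨⟨γ, a⟩, rfl⟩
        left_inv := by rintro ⟨⟨g, a⟩, rfl⟩; rfl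
        right_inv := fun a => rfl }
    rw [Nat.card_congr (e1.trans e2)]
    simp
  refine ⟨m, δ, hm, fun j => (E.symm j).1.2, hcard, ?_⟩
  let s : Fin n → Fin m := fun i =>
    if h : ∃ k, Θ k = i then E h.choose else E ⟨⟨v i, hv i⟩, ⟨0, hypos i⟩⟩
  have hδE : ∀ k : K, δ (E k) = (k.1 : Set A) := by
    intro k; show ((E.symm (E k)).1 : Set A) = _; rw [E.symm_apply_apply]
  refine ⟨s, ?_, ?_⟩
  · intro j
    refine ⟨Θ (E.symm j), ?_⟩
    have h : ∃ k, Θ k = Θ (E.symm j) := ⟨E.symm j, rfl⟩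
    show (if h : ∃ k, Θ k = Θ (E.symm j) then E h.choose else _) = j
    rw [dif_pos h, hΘinj h.choose_spec]
    exact E.apply_symm_apply j
  · intro i
    show v i = δ (if h : ∃ k, Θ k = i then E h.choose else E ⟨⟨v i, hv i⟩, ⟨0, hypos i⟩⟩)
    by_cases h : ∃ k, Θ k = i
    · rw [dif_pos h, hδE]
      rw [← hΘv h.choose, h.choose_spec]
    · rw [dif_neg h, hδE]

end Aux

/-- The map `ψ : F ↦ pt '' (F^Inv)` on polymorphism clones of subsets of `DD Γ` is
well-defined (each value is a downset of `(ℕ^Γ, ⊑)`) and is an order embedding of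
`({Pol Q : Q ⊆ DD Γ}, ⊇)` into the downsets of `(ℕ^Γ, ⊑)` ordered by inclusion:
`ψ(F₁) ⊆ ψ(F₂) ↔ F₂ ⊆ F₁`. -/


theorem psi_well_defined_and_order_embedding {A : Type*} (Γ : Set (Set A)) :
    (∀ Q ⊆ DD Γ, IsSleDownset (pt Γ '' InvDD Γ (Pol Q))) ∧
    (∀ Q₁ Q₂ : Set (FinRel A), Q₁ ⊆ DD Γ → Q₂ ⊆ DD Γ →
      (pt Γ '' InvDD Γ (Pol Q₁) ⊆ pt Γ '' InvDD Γ (Pol Q₂) ↔ Pol Q₂ ⊆ Pol Q₁)) := by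
  classical
  constructor
  · rintro Q hQ x ⟨ρ, ⟨hρDD, hρpres⟩, rfl⟩ y ⟨hy1, hy2⟩
    by_cases hcase : ρ.2 = Set.univ ∧ Set.univ ∉ Γ
    · refine ⟨ρ, ⟨hρDD, hρpres⟩, ?_⟩
      have hpt0 : ∀ γ : ↥Γ, pt Γ ρ γ = 0 := by
        intro γ
        have hp := param_univ (Γ := Γ) hcase.1
        have hie : IsEmpty {i : Fin ρ.1 // param Γ ρ i = (γ : Set A)} := by
          refine ⟨fun z => ?_⟩
          obtain ⟨i, hi⟩ := z
          rw [hp] at hi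
          exact hcase.2 (by rw [show (Set.univ : Set A) = ↑γ from hi]; exact γ.2)
        exact Nat.card_of_isEmpty
      funext γ
      have hy0 : y γ = 0 := by
        by_contra hne
        have : γ ∈ supp (pt Γ ρ) := hy2 ▸ hne
        exact this (hpt0 γ)
      rw [hpt0 γ, hy0]
    · have hvΓ : ∀ i, param Γ ρ i ∈ Γ := by
        by_cases hU : ρ.2 = Set.univ
        · have hunivΓ : Set.univ ∈ Γ := by
            by_contra h; exact hcase ⟨hU, h⟩
          intro i; rw [param_univ hU]; exact hunivΓ
        · exact param_mem hρDD hU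
      have hsupp' : ∀ γ : ↥Γ, y γ = 0 ↔
          Nat.card {i // param Γ ρ i = (γ : Set A)} = 0 := by
        intro γ
        have h1 : γ ∈ supp y ↔ γ ∈ supp (pt Γ ρ) := by rw [hy2]
        exact not_iff_not.mp h1
      obtain ⟨m, δ, hm, hδΓ, hcard, s, hs, hvs⟩ :=
        main_construction hρDD.1 (param Γ ρ) hvΓ y hy1 hsupp'
      have hδv : ∀ j, ∃ i, param Γ ρ i = δ j := by
        intro j
        have h1 : Nat.card {j' // δ j' = ((⟨δ j, hδΓ j⟩ : ↥Γ) : Set A)} ≠ 0 :=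
          Nat.card_ne_zero.mpr ⟨⟨⟨j, rfl⟩⟩, inferInstance⟩
        have h2 : y ⟨δ j, hδΓ j⟩ ≠ 0 := by rw [← hcard ⟨δ j, hδΓ j⟩]; exact h1
        have h3 : Nat.card {i // param Γ ρ i = ((⟨δ j, hδΓ j⟩ : ↥Γ) : Set A)} ≠ 0 :=
          fun h => h2 ((hsupp' _).mpr h)
        obtain ⟨⟨i, hi⟩⟩ := (Nat.card_ne_zero.mp h3).1
        exact ⟨i, hi⟩
      have hconst : Cross δ = Set.univ → δ = fun _ => Set.univ := by
        intro hCu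
        by_cases hU : ρ.2 = Set.univ
        · funext j
          obtain ⟨i, hi⟩ := hδv j
          rw [← hi, param_univ hU]
        · exfalso
          obtain ⟨x, hx⟩ : ∃ x, x ∉ ρ.2 := by
            by_contra hc; push_neg at hc; exact hU (Set.eq_univ_iff_forall.2 hc)
          have hxv : ∀ i, x i ∉ param Γ ρ i := by
            rw [param_cross_eq hρDD] at hx
            exact fun i hi => hx ⟨i, hi⟩
          have hmem : (fun j => x (hδv j).choose) ∈ Cross δ := by
            rw [hCu]; exact Set.mem_univ _
          obtain ⟨j, hj⟩ := hmem
          exact hxv (hδv j).choose (by rw [(hδv j).choose_spec]; exact hj)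
      have hpσ : param Γ (⟨m, Cross δ⟩ : FinRel A) = δ := param_cross hm δ hδΓ hconst
      have hptσ : pt Γ (⟨m, Cross δ⟩ : FinRel A) = y := by
        funext γ
        show Nat.card {i : Fin m // param Γ (⟨m, Cross δ⟩ : FinRel A) i = (γ : Set A)} = y γ
        rw [hpσ]
        exact hcard γ
      refine ⟨⟨m, Cross δ⟩, ⟨⟨hm, δ, hδΓ, rfl⟩, ?_⟩, hptσ⟩
      intro f hf
      exact preserves_cross_of_surj hs hvs
        (by rw [← param_cross_eq hρDD]; exact hρpres f hf)
  · intro Q₁ Q₂ hQ₁ hQ₂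
    constructor
    · intro hsub f hf ρ hρQ₁
      have hρDD := hQ₁ hρQ₁
      have hmem : pt Γ ρ ∈ pt Γ '' InvDD Γ (Pol Q₁) :=
        ⟨ρ, ⟨hρDD, fun g hg => hg ρ hρQ₁⟩, rfl⟩
      obtain ⟨σ, ⟨hσDD, hσpres⟩, hpt⟩ := hsub hmem
      have hfσ : Preserves f.2 σ.2 := hσpres f hf
      by_cases hU : ρ.2 = Set.univ
      · rw [hU]; exact fun r hr => trivial
      · have hvρ : ∀ i, param Γ ρ i ∈ Γ := param_mem hρDD hU
        have hσU : σ.2 ≠ Set.univ := by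
          intro hσU
          have hpσ := param_univ (Γ := Γ) hσU
          have hall : ∀ i, param Γ ρ i = Set.univ := by
            intro i
            have h1 : pt Γ ρ ⟨param Γ ρ i, hvρ i⟩ ≠ 0 :=
              Nat.card_ne_zero.mpr ⟨⟨⟨i, rfl⟩⟩, inferInstance⟩
            have h2 : pt Γ σ ⟨param Γ ρ i, hvρ i⟩ ≠ 0 := by rw [hpt]; exact h1
            obtain ⟨⟨j, hj⟩⟩ := (Nat.card_ne_zero.mp h2).1
            rw [hpσ] at hj
            exact hj.symm
          apply hU
          rw [param_cross_eq hρDD, funext hall]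
          exact cross_const_univ hρDD.1
        have hvσ : ∀ j, param Γ σ j ∈ Γ := param_mem hσDD hσU
        have hfib : ∀ t : Set A, Nat.card {j : Fin σ.1 // param Γ σ j = t} =
            Nat.card {i : Fin ρ.1 // param Γ ρ i = t} := by
          intro t
          by_cases ht : t ∈ Γ
          · exact congrFun hpt ⟨t, ht⟩
          · have h1 : IsEmpty {j : Fin σ.1 // param Γ σ j = t} :=
              ⟨fun z => ht (z.2 ▸ hvσ z.1)⟩
            have h2 : IsEmpty {i : Fin ρ.1 // param Γ ρ i = t} :=
              ⟨fun z => ht (z.2 ▸ hvρ z.1)⟩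
            rw [Nat.card_of_isEmpty, Nat.card_of_isEmpty]
        obtain ⟨e, he⟩ := exists_equiv_of_fiber_card (param Γ σ) (param Γ ρ) hfib
        rw [param_cross_eq hρDD]
        exact preserves_cross_of_surj e.surjective (fun t => (he t).symm)
          (by rw [← param_cross_eq hσDD]; exact hfσ)
    · rintro h x ⟨ρ, ⟨hρDD, hρpres⟩, rfl⟩
      exact ⟨ρ, ⟨hρDD, fun f hf => hρpres f (h hf)⟩, rfl⟩
end

section
/- For every finite nonempty set I, the collection of all downsets of the poset (ℕ^I, ⊑) has cardinality exactly ℵ₀, where x ⊑ y iff x(i) ≤ y(i) for all i ∈ I and x and y have the same support. -/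
section

variable {I : Type*}

namespace sle

theorem le {x y : I → ℕ} (h : sle x y) : x ≤ y := h.1

theorem trans {x y z : I → ℕ} (hxy : sle x y) (hyz : sle y z) : sle x z :=
  ⟨fun i => (hxy.1 i).trans (hyz.1 i), hxy.2.trans hyz.2⟩

end sle

theorem IsLowerSet.isSleDownset {X : Set (I → ℕ)} (hX : IsLowerSet X) : IsSleDownset X :=
  fun _ hx _ hyx => hX hyx.le hx

theorem IsAntichain.finite_of_sle [Finite I] {A : Set (I → ℕ)} (hA : IsAntichain sle A) :
    A.Finite := by
  have hA_eq : A = ⋃ S : Set I, A ∩ {x | supp x = S} := by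
    ext x
    simp
  rw [hA_eq]
  refine Set.finite_iUnion fun S => ?_
  have hanti : IsAntichain (· ≤ ·) (A ∩ {x | supp x = S}) :=
    fun _ ha _ hb hne hab => hA ha.1 hb.1 hne ⟨hab, ha.2.trans hb.2.symm⟩
  exact hanti.finite_of_partiallyWellOrderedOn (Set.isPWO_of_wellQuasiOrderedLE _)

def sleMinimals (S : Set (I → ℕ)) : Set (I → ℕ) :=
  {m | m ∈ S ∧ ∀ y ∈ S, sle y m → y = m}

theorem isAntichain_sleMinimals (S : Set (I → ℕ)) : IsAntichain sle (sleMinimals S) :=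
  fun _ ha _ hb hne hab => hne (hb.2 _ ha.1 hab)

theorem exists_mem_sleMinimals_sle [Finite I] {S : Set (I → ℕ)} {x : I → ℕ} (hx : x ∈ S) :
    ∃ m ∈ sleMinimals S, sle m x := by
  obtain ⟨m, ⟨hmx, hmS⟩, hm_min⟩ := (wellFounded_lt (α := I → ℕ)).has_min
    {y | sle y x ∧ y ∈ S} ⟨x, ⟨fun _ => le_rfl, rfl⟩, hx⟩
  refine ⟨m, ⟨hmS, fun y hyS hym => ?_⟩, hmx⟩
  by_contra hne
  exact hm_min y ⟨hym.trans hmx, hyS⟩ (lt_of_le_of_ne hym.le hne)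

theorem IsSleDownset.eq_setOf_forall_not_sle [Finite I] {X : Set (I → ℕ)}
    (hX : IsSleDownset X) : X = {x | ∀ m ∈ sleMinimals Xᶜ, ¬ sle m x} := by
  ext x
  refine ⟨fun hx m hm hmx => hm.1 (hX x hx m hmx), fun hx => ?_⟩
  by_contra hxX
  obtain ⟨m, hm, hmx⟩ := exists_mem_sleMinimals_sle (S := Xᶜ) hxX
  exact hx m hm hmx

theorem countable_setOf_isSleDownset [Finite I] :
    {X : Set (I → ℕ) | IsSleDownset X}.Countable := by
  refine Set.MapsTo.countable_of_injOn (f := fun X : Set (I → ℕ) => sleMinimals Xᶜ)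
    (t := {s : Set (I → ℕ) | s.Finite})
    (fun X _ => (isAntichain_sleMinimals Xᶜ).finite_of_sle) ?_ Set.Countable.ofPred_finite
  intro X hX Y hY hXY
  rw [IsSleDownset.eq_setOf_forall_not_sle hX, IsSleDownset.eq_setOf_forall_not_sle hY]
  simp only [hXY]

theorem infinite_setOf_isSleDownset [Nonempty I] :
    {X : Set (I → ℕ) | IsSleDownset X}.Infinite :=
  Set.infinite_of_injective_forall_mem (f := fun n : ℕ => Set.Iic (Function.const I n))
    (Set.Iic_injective.comp Function.const_injective) fun _ => (isLowerSet_Iic _).isSleDownset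

end

/-- For every finite nonempty set `I`, the collection of all downsets of the poset
`(ℕ^I, ⊑)` has cardinality exactly `ℵ₀`. -/
theorem mk_sle_downsets_eq_aleph0 (I : Type*) [Finite I] [Nonempty I] :
    Cardinal.mk {X : Set (I → ℕ) | IsSleDownset X} = Cardinal.aleph0 := by
  have := (countable_setOf_isSleDownset (I := I)).to_subtype
  have := (infinite_setOf_isSleDownset (I := I)).to_subtype
  exact Cardinal.mk_eq_aleph0 _
end

section
/- Let A be a set and γ ⊆ A a subset with ∅ ≠ γ ⊊ A. For m ≥ 1 let ρ_m := R(γ,…,γ) be the m-ary cross relation with m copies of γ as parameters. Then for every m ≥ 2 the inclusion Pol({ρ_m}) ⊆ Pol({ρ_{m−1}}) is strict; consequently (Pol({ρ_m}))_{m≥1} is a strictly descending ω-chain of finitely related polymorphism clones. -/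
/-- For a non-trivial subset `∅ ≠ γ ⊊ A` and `ρ_m := R(γ,…,γ)` (`m` copies), the
inclusion `Pol({ρ_m}) ⊂ Pol({ρ_{m-1}})` is strict for every `m ≥ 2`; hence the
clones `Pol({ρ_m})` form a strictly descending `ω`-chain. -/
theorem pol_cross_strict_chain {A : Type*} (γ : Set A)
    (hne : γ.Nonempty) (hproper : γ ≠ Set.univ) :
    ∀ m : ℕ, 2 ≤ m →
      Pol {(⟨m, Cross (fun _ : Fin m => γ)⟩ : FinRel A)} ⊂
        Pol {(⟨m - 1, Cross (fun _ : Fin (m - 1) => γ)⟩ : FinRel A)} := by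
  classical
  rintro m hm
  obtain ⟨n, rfl⟩ : ∃ n, m = n + 2 := ⟨m - 2, by omega⟩
  obtain ⟨a, ha⟩ := hne
  obtain ⟨b, hb⟩ := (Set.ne_univ_iff_exists_notMem γ).mp hproper
  constructor
  · -- inclusion
    rintro f hf ρ hρ
    rw [Set.mem_singleton_iff] at hρ
    subst hρ
    have hf2 := hf ⟨n + 2, Cross (fun _ : Fin (n + 2) => γ)⟩ rfl
    intro r hr
    -- clamp map
    set e : Fin (n + 2) → Fin (n + 1) := fun i => ⟨min i.val n, by omega⟩ with he
    have key := hf2 (fun j i => r j (e i)) ?_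
    · obtain ⟨i, hi⟩ := key
      exact ⟨e i, hi⟩
    · intro j
      obtain ⟨i₀, hi₀⟩ := hr j
      refine ⟨⟨i₀.val, by omega⟩, ?_⟩
      have : e ⟨i₀.val, by omega⟩ = i₀ := by
        apply Fin.ext
        simp [he, Nat.min_eq_left (Nat.lt_succ_iff.mp i₀.isLt)]
      simpa [this] using hi₀
  · -- strictness
    intro hle
    set F : (Fin (n + 1 + 1) → A) → A :=
      fun x => if ∃! j, x j ∈ γ then b else a with hF
    have hmem : (⟨n + 1, F⟩ : Op A) ∈
        Pol {(⟨n + 2 - 1, Cross (fun _ : Fin (n + 2 - 1) => γ)⟩ : FinRel A)} := by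
      rintro ρ hρ
      rw [Set.mem_singleton_iff] at hρ
      subst hρ
      intro r hr
      -- choose for each column a row with entry in γ
      choose i hi using hr
      -- pigeonhole: two columns share a row
      obtain ⟨j₁, j₂, hjne, hjeq⟩ :=
        Fintype.exists_ne_map_eq_of_card_lt i (by simp)
      refine ⟨i j₁, ?_⟩
      have hnotu : ¬ ∃! j, r j (i j₁) ∈ γ := by
        rintro ⟨j, -, huniq⟩
        have h1 : j₁ = j := huniq j₁ (hi j₁)
        have h2 : j₂ = j := huniq j₂ (hjeq ▸ hi j₂)
        exact hjne (h1.trans h2.symm)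
      simpa [hF, hnotu] using ha
    have hnmem := hle hmem ⟨n + 2, Cross (fun _ : Fin (n + 2) => γ)⟩ rfl
    -- the violating matrix
    set r : Fin (n + 2) → Fin (n + 2) → A :=
      fun j i => if i = j then a else b with hr
    have hcols : ∀ j, r j ∈ Cross (fun _ : Fin (n + 2) => γ) := by
      intro j
      exact ⟨j, by simp [hr, ha]⟩
    obtain ⟨i, hi⟩ := hnmem r hcols
    have hu : ∃! j, r j i ∈ γ := by
      refine ⟨i, by simp [hr, ha], ?_⟩
      intro j hj
      by_contra hne'
      have : r j i = b := by simp [hr, Ne.symm hne']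
      rw [this] at hj
      exact hb hj
    have hi' : F (fun j => r j i) ∈ γ := hi
    have : F (fun j => r j i) = b := by simp [hF, hu]
    rw [this] at hi'
    exact hb hi'
end

section
/- Let Γ be a countable (finite or countably infinite) set of subsets of a set A containing a non-trivial member γ with ∅ ≠ γ ⊊ A. Then the set {Pol(Q) : Q ⊆ DD(Γ) finite} of polymorphism clones of finite sets of relations disjunctively definable from Γ has cardinality exactly ℵ₀. -/
/-!
Only countably many finite sets of crosses exist over a countable `Γ`, hence only countably many
clones `Pol Q`. Conversely, let `ρₙ = R(γ,…,γ)` be `n`-ary, pick `a ∈ γ`, `b ∉ γ`, and let `t` be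
the `k`-ary operation returning `a` when at least two of its arguments lie in `γ` and `b`
otherwise. By pigeonhole `t` preserves `ρₙ` for `n < k`, whereas for `n ≥ k` the `k` rows with
`a` on the diagonal and `b` elsewhere are mapped to the constant tuple `b`. So the `(n+1)`-ary
`t` separates `Pol {ρₙ}` from `Pol {ρₘ}` for `m > n`.
-/

open Classical in
noncomputable def atLeastTwoMem {A : Type*} (γ : Set A) (a b : A) (k : ℕ) (x : Fin k → A) : A :=
  if ∃ i j, i ≠ j ∧ x i ∈ γ ∧ x j ∈ γ then a else b

section AtLeastTwoMem

variable {A : Type*} {γ : Set A} {a b : A} {k n : ℕ}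

lemma preserves_atLeastTwoMem_cross_of_lt (ha : a ∈ γ) (hn : n < k) :
    Preserves (atLeastTwoMem γ a b k) (Cross fun _ : Fin n => γ) := by
  intro r hr
  choose c hc using hr
  obtain ⟨j₁, j₂, hne, heq⟩ := Fintype.exists_ne_map_eq_of_card_lt c (by simpa using hn)
  have htwo : ∃ i j, i ≠ j ∧ r i (c j₁) ∈ γ ∧ r j (c j₁) ∈ γ :=
    ⟨j₁, j₂, hne, hc j₁, heq ▸ hc j₂⟩
  exact ⟨c j₁, by simpa only [atLeastTwoMem, if_pos htwo] using ha⟩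

lemma not_preserves_atLeastTwoMem_cross_of_le (ha : a ∈ γ) (hb : b ∉ γ) (hn : k ≤ n) :
    ¬ Preserves (atLeastTwoMem γ a b k) (Cross fun _ : Fin n => γ) := by
  intro h
  let r : Fin k → Fin n → A := fun j i => if i = Fin.castLE hn j then a else b
  have hr_mem : ∀ j i, r j i ∈ γ ↔ i = Fin.castLE hn j := fun j i => by
    by_cases hi : i = Fin.castLE hn j <;> simp [r, hi, ha, hb]
  obtain ⟨i, hi⟩ := h r fun j => ⟨Fin.castLE hn j, (hr_mem j _).2 rfl⟩
  have hnot_two : ¬ ∃ j₁ j₂, j₁ ≠ j₂ ∧ r j₁ i ∈ γ ∧ r j₂ i ∈ γ := by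
    rintro ⟨j₁, j₂, hne, h₁, h₂⟩
    exact hne (Fin.castLE_injective hn (((hr_mem j₁ i).1 h₁).symm.trans ((hr_mem j₂ i).1 h₂)))
  simp only [atLeastTwoMem, if_neg hnot_two] at hi
  exact hb hi

end AtLeastTwoMem

lemma pol_singleton_cross_ne_of_lt {A : Type*} {γ : Set A} (hne : γ.Nonempty)
    (hproper : γ ≠ Set.univ) {n m : ℕ} (hnm : n < m) :
    Pol {(⟨n, Cross fun _ : Fin n => γ⟩ : FinRel A)} ≠
      Pol {(⟨m, Cross fun _ : Fin m => γ⟩ : FinRel A)} := by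
  obtain ⟨a, ha⟩ := hne
  obtain ⟨b, hb⟩ := (Set.ne_univ_iff_exists_notMem γ).1 hproper
  intro hEq
  have hmem : (⟨n, atLeastTwoMem γ a b (n + 1)⟩ : Op A) ∈ Pol {⟨n, Cross fun _ : Fin n => γ⟩} := by
    rintro _ rfl
    exact preserves_atLeastTwoMem_cross_of_lt ha n.lt_succ_self
  rw [hEq] at hmem
  exact not_preserves_atLeastTwoMem_cross_of_le ha hb hnm (hmem _ rfl)

lemma injective_pol_singleton_cross {A : Type*} {γ : Set A} (hne : γ.Nonempty)
    (hproper : γ ≠ Set.univ) :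
    Function.Injective fun n : ℕ => Pol {(⟨n, Cross fun _ : Fin n => γ⟩ : FinRel A)} := by
  intro n m h
  by_contra hnm
  rcases Nat.lt_or_gt_of_ne hnm with hlt | hlt
  · exact pol_singleton_cross_ne_of_lt hne hproper hlt h
  · exact pol_singleton_cross_ne_of_lt hne hproper hlt h.symm

lemma cross_const_mem_dd {A : Type*} {Γ : Set (Set A)} {γ : Set A} (hγ : γ ∈ Γ) {n : ℕ}
    (hn : 1 ≤ n) : (⟨n, Cross fun _ : Fin n => γ⟩ : FinRel A) ∈ DD Γ :=
  ⟨hn, fun _ => γ, fun _ => hγ, rfl⟩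

lemma Set.Countable.dd {A : Type*} {Γ : Set (Set A)} (hΓ : Γ.Countable) : (DD Γ).Countable := by
  have : Countable Γ := hΓ.to_subtype
  refine (Set.countable_range fun p : Σ n : ℕ, Fin n → Γ =>
    (⟨p.1, Cross fun i => (p.2 i : Set A)⟩ : FinRel A)).mono ?_
  rintro ⟨n, R⟩ ⟨-, γ, hγ, hR⟩
  exact ⟨⟨n, fun i => ⟨γ i, hγ i⟩⟩, congrArg (Sigma.mk n) hR.symm⟩

lemma Set.Countable.setOf_pol_finite_subset {A : Type*} {S : Set (FinRel A)} (hS : S.Countable) :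
    {F : Set (Op A) | ∃ Q, Q ⊆ S ∧ Q.Finite ∧ F = Pol Q}.Countable := by
  refine ((Set.countable_ofPred_finite_subset hS).image Pol).mono ?_
  rintro F ⟨Q, hQS, hQ, rfl⟩
  exact ⟨Q, ⟨hQ, hQS⟩, rfl⟩

/-- For a countable unary relational language `Γ` containing a non-trivial member
`∅ ≠ γ ⊊ A`, the set of polymorphism clones of finite sets of relations
disjunctively definable from `Γ` has cardinality exactly `ℵ₀`. -/
theorem mk_pol_finite_eq_aleph0_of_countable_language {A : Type*} (Γ : Set (Set A))
    (hΓ : Γ.Countable) (γ : Set A) (hγΓ : γ ∈ Γ) (hne : γ.Nonempty)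
    (hproper : γ ≠ Set.univ) :
    Cardinal.mk {F : Set (Op A) | ∃ Q, Q ⊆ DD Γ ∧ Q.Finite ∧ F = Pol Q} =
      Cardinal.aleph0 := by
  have hcountable := hΓ.dd.setOf_pol_finite_subset
  have hinfinite : {F : Set (Op A) | ∃ Q, Q ⊆ DD Γ ∧ Q.Finite ∧ F = Pol Q}.Infinite := by
    refine (Set.infinite_range_of_injective
      ((injective_pol_singleton_cross hne hproper).comp Nat.succ_injective)).mono ?_
    rintro _ ⟨n, rfl⟩
    exact ⟨_, Set.singleton_subset_iff.2 (cross_const_mem_dd hγΓ n.succ_pos),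
      Set.finite_singleton _, rfl⟩
  have := hcountable.to_subtype
  have := hinfinite.to_subtype
  exact Cardinal.mk_eq_aleph0 _
end
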